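/- For N binary random variables (N ≥ 1), the binding information is at most N - 1 bits: B(X_{1..N}) ≤ (N-1)·log 2. -/
import Mathlib


open scoped Classical
open Finset Real

noncomputable section

/-- Probability of the event `X = s` under weights `p` on a finite sample space. -/
def pr {Ω : Type*} [Fintype Ω] (p : Ω → ℝ) {S : Type*} (X : Ω → S) (s : S) : ℝ :=
  ∑ ω, if X ω = s then p ω else 0

/-- Shannon entropy of a finitely-valued random variable `X`. -/
def ent {Ω : Type*} [Fintype Ω] (p : Ω → ℝ) {S : Type*} [Fintype S] (X : Ω → S) : ℝ :=
  ∑ s, Real.negMulLog (pr p X s)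

/-- Conditional entropy `H(X | Y)`. -/
def condEnt {Ω : Type*} [Fintype Ω] (p : Ω → ℝ) {S T : Type*} [Fintype S] [Fintype T]
    (X : Ω → S) (Y : Ω → T) : ℝ :=
  ent p (fun ω => (X ω, Y ω)) - ent p Y

/-- The joint random variable of a finite family. -/
def jointVar {Ω : Type*} {A : Type*} {S : A → Type*} (X : ∀ α, Ω → S α) :
    Ω → ∀ α, S α :=
  fun ω α => X α ω

/-- The tuple of all variables except `α`. -/
def restVar {Ω : Type*} {A : Type*} {S : A → Type*} (X : ∀ α, Ω → S α) (α : A) :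
    Ω → ∀ β : {β : A // β ≠ α}, S β.1 :=
  fun ω β => X β.1 ω

/-- Binding information `B(X_A)`. -/
def bindingInfo {Ω : Type*} [Fintype Ω] (p : Ω → ℝ) {A : Type*} [Fintype A]
    {S : A → Type*} [∀ α, Fintype (S α)] (X : ∀ α, Ω → S α) : ℝ :=
  ent p (jointVar X) - ∑ α, condEnt p (X α) (restVar X α)

/-- Multi-information `I(X_A)`. -/
def multiInfo {Ω : Type*} [Fintype Ω] (p : Ω → ℝ) {A : Type*} [Fintype A]
    {S : A → Type*} [∀ α, Fintype (S α)] (X : ∀ α, Ω → S α) : ℝ :=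
  (∑ α, ent p (X α)) - ent p (jointVar X)

section Aux

variable {Ω : Type*} [Fintype Ω] (p : Ω → ℝ)

lemma pr_nonneg (hp : ∀ ω, 0 ≤ p ω) {S : Type*} (X : Ω → S) (s : S) : 0 ≤ pr p X s := by
  refine Finset.sum_nonneg fun ω _ => ?_
  split
  · exact hp ω
  · exact le_refl 0

lemma sum_pr {S : Type*} [Fintype S] (X : Ω → S) : ∑ s, pr p X s = ∑ ω, p ω := by
  unfold pr
  rw [Finset.sum_comm]
  exact Finset.sum_congr rfl fun ω _ => by simp

lemma negMulLog_add_le {a b : ℝ} (ha : 0 ≤ a) (hb : 0 ≤ b) :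
    Real.negMulLog (a + b) ≤ Real.negMulLog a + Real.negMulLog b := by
  have h1 : a * Real.log a ≤ a * Real.log (a + b) := by
    rcases eq_or_lt_of_le ha with h | h
    · simp [← h]
    · exact mul_le_mul_of_nonneg_left (Real.log_le_log h (by linarith)) ha
  have h2 : b * Real.log b ≤ b * Real.log (a + b) := by
    rcases eq_or_lt_of_le hb with h | h
    · simp [← h]
    · exact mul_le_mul_of_nonneg_left (Real.log_le_log h (by linarith)) hb
  simp only [Real.negMulLog, neg_mul]
  nlinarith [h1, h2]

lemma negMulLog_sum_le {ι : Type*} (t : Finset ι) (a : ι → ℝ) (ha : ∀ i ∈ t, 0 ≤ a i) :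
    Real.negMulLog (∑ i ∈ t, a i) ≤ ∑ i ∈ t, Real.negMulLog (a i) := by
  induction t using Finset.cons_induction with
  | empty => simp
  | cons i s his ih =>
      rw [Finset.sum_cons, Finset.sum_cons]
      calc Real.negMulLog (a i + ∑ j ∈ s, a j)
          ≤ Real.negMulLog (a i) + Real.negMulLog (∑ j ∈ s, a j) :=
            negMulLog_add_le (ha i (Finset.mem_cons_self i s))
              (Finset.sum_nonneg fun j hj => ha j (Finset.mem_cons_of_mem hj))
        _ ≤ _ := by
            have := ih fun j hj => ha j (Finset.mem_cons_of_mem hj)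
            linarith

lemma ent_le_log_card (hp : ∀ ω, 0 ≤ p ω) (hsum : ∑ ω, p ω = 1)
    {S : Type*} [Fintype S] (X : Ω → S) :
    ent p X ≤ Real.log (Fintype.card S) := by
  rcases isEmpty_or_nonempty S with hS | hS
  · simp [ent, Fintype.card_eq_zero]
  · have hn : (0 : ℝ) < Fintype.card S := by exact_mod_cast Fintype.card_pos
    have hJ := Real.concaveOn_negMulLog.le_map_sum (t := (Finset.univ : Finset S))
      (w := fun _ : S => ((Fintype.card S : ℝ))⁻¹) (p := fun s => pr p X s)
      (fun i _ => by positivity)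
      (by simp [Finset.sum_const, Finset.card_univ, nsmul_eq_mul, mul_inv_cancel₀ hn.ne'])
      (fun i _ => pr_nonneg p hp X i)
    simp only [smul_eq_mul, ← Finset.mul_sum] at hJ
    rw [sum_pr, hsum, mul_one] at hJ
    have hval : Real.negMulLog ((Fintype.card S : ℝ))⁻¹
        = ((Fintype.card S : ℝ))⁻¹ * Real.log (Fintype.card S) := by
      simp [Real.negMulLog, Real.log_inv]
    rw [hval] at hJ
    have := mul_le_mul_of_nonneg_left hJ (le_of_lt hn)
    rw [← mul_assoc, ← mul_assoc, mul_inv_cancel₀ hn.ne', one_mul, one_mul] at this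
    exact this

lemma ent_comp_inj {S T : Type*} [Fintype S] [Fintype T] (X : Ω → S) (f : S → T)
    (hf : Function.Injective f) : ent p (fun ω => f (X ω)) = ent p X := by
  unfold ent
  rw [← Finset.sum_subset (Finset.subset_univ ((Finset.univ : Finset S).image f))]
  · rw [Finset.sum_image (fun a _ b _ h => hf h)]
    refine Finset.sum_congr rfl fun s _ => ?_
    congr 1
    unfold pr
    exact Finset.sum_congr rfl fun ω _ => by simp [hf.eq_iff]
  · intro t _ ht
    have hzero : pr p (fun ω => f (X ω)) t = 0 := by
      refine Finset.sum_eq_zero fun ω _ => ?_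
      have hne : f (X ω) ≠ t := fun h => ht (Finset.mem_image.2 ⟨X ω, Finset.mem_univ _, h⟩)
      simp [hne]
    simp [hzero]

lemma pr_snd_eq {S T : Type*} [Fintype S] [Fintype T] (X : Ω → S) (Y : Ω → T) (t : T) :
    pr p Y t = ∑ s, pr p (fun ω => (X ω, Y ω)) (s, t) := by
  unfold pr
  rw [Finset.sum_comm]
  refine Finset.sum_congr rfl fun ω _ => ?_
  by_cases h : Y ω = t
  · subst h
    rw [Finset.sum_eq_single (X ω)]
    · simp
    · intro b _ hb
      simp [Prod.ext_iff, Ne.symm hb]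
    · simp
  · simp [h, Prod.ext_iff]

lemma ent_snd_le_pair (hp : ∀ ω, 0 ≤ p ω) {S T : Type*} [Fintype S] [Fintype T]
    (X : Ω → S) (Y : Ω → T) :
    ent p Y ≤ ent p (fun ω => (X ω, Y ω)) := by
  unfold ent
  rw [Fintype.sum_prod_type, Finset.sum_comm]
  refine Finset.sum_le_sum fun t _ => ?_
  rw [pr_snd_eq p X Y t]
  exact negMulLog_sum_le _ _ fun s _ => pr_nonneg p hp _ _

lemma condEnt_nonneg (hp : ∀ ω, 0 ≤ p ω) {S T : Type*} [Fintype S] [Fintype T]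
    (X : Ω → S) (Y : Ω → T) : 0 ≤ condEnt p X Y :=
  sub_nonneg.2 (ent_snd_le_pair p hp X Y)

lemma ent_inst_irrel {S : Type*} (i1 i2 : Fintype S) (X : Ω → S) :
    @ent Ω _ p S i1 X = @ent Ω _ p S i2 X := by
  congr 1
  exact Subsingleton.elim i1 i2

end Aux

/-- Abstract key lemma: binding information is at most the entropy of the rest at any index. -/
lemma bindingInfo_le_ent_rest {Ω : Type*} [Fintype Ω] (p : Ω → ℝ) (hp : ∀ ω, 0 ≤ p ω)
    {A : Type*} [Fintype A] {S : A → Type*} [∀ α, Fintype (S α)] (X : ∀ α, Ω → S α)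
    (α0 : A) :
    bindingInfo p X ≤ ent p (restVar X α0) := by
  have hcond : ∀ α : A,
      condEnt p (X α) (restVar X α) = ent p (jointVar X) - ent p (restVar X α) := by
    intro α
    unfold condEnt
    congr 1
    have hinj : Function.Injective
        (fun g : (∀ β : A, S β) => (g α, fun β : {β : A // β ≠ α} => g β.1)) := by
      intro g h hgh
      funext β
      by_cases hβ : β = α
      · subst hβ; exact congrArg Prod.fst hgh
      · exact congrFun (congrArg Prod.snd hgh) ⟨β, hβ⟩
    exact ent_comp_inj p (jointVar X)
      (fun g : (∀ β : A, S β) => (g α, fun β : {β : A // β ≠ α} => g β.1)) hinj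
  have hnn : ∀ α : A, 0 ≤ condEnt p (X α) (restVar X α) :=
    fun α => condEnt_nonneg p hp _ _
  unfold bindingInfo
  rw [← Finset.add_sum_erase _ _ (Finset.mem_univ α0), hcond α0]
  have h2 : 0 ≤ ∑ α ∈ Finset.univ.erase α0, condEnt p (X α) (restVar X α) :=
    Finset.sum_nonneg fun α _ => hnn α
  linarith

/-- for `N ≥ 1` binary variables, `B(X_{1..N}) ≤ (N-1) log 2`. -/
theorem bindingInfo_binary_le {Ω : Type*} [Fintype Ω] (p : Ω → ℝ)
    (hp : ∀ ω, 0 ≤ p ω) (hsum : ∑ ω, p ω = 1)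
    {N : ℕ} (hN : 1 ≤ N) (X : Fin N → Ω → Bool) :
    bindingInfo p (fun i => X i) ≤ ((N : ℝ) - 1) * Real.log 2 := by
  classical
  set α0 : Fin N := ⟨0, hN⟩ with hα0
  have h1 := (bindingInfo_le_ent_rest p hp (fun i => X i) α0).trans
    (le_of_eq (ent_inst_irrel p _ inferInstance _))
  have h2 := ent_le_log_card p hp hsum (restVar (fun i => X i) α0)
  refine le_trans (le_trans h1 h2) ?_
  have hcard : Fintype.card {β : Fin N // β ≠ α0} = N - 1 := by
    rw [Fintype.card_subtype_compl, Fintype.card_subtype_eq, Fintype.card_fin]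
  have hc : Fintype.card (∀ _ : {β : Fin N // β ≠ α0}, Bool) = 2 ^ (N - 1) := by
    simp [Fintype.card_fun, hcard]
  rw [hc]
  have h4 : ((2 ^ (N - 1) : ℕ) : ℝ) = (2 : ℝ) ^ (N - 1) := by push_cast; ring
  rw [h4, Real.log_pow]
  have h3 : ((N - 1 : ℕ) : ℝ) = (N : ℝ) - 1 := by
    rw [Nat.cast_sub hN, Nat.cast_one]
  rw [h3]
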